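/- arXiv:2307.15932 — 5 statements merged into one kernel-verified Lean document; each statement's English description precedes it below -/
import Mathlib

section
/- Let G be an abelian group. Then every characteristic subgroup of the direct sum G ⊕ G is fully invariant in G ⊕ G. (That is, if C is a subgroup of G ⊕ G such that φ(C) ⊆ C for every automorphism φ of G ⊕ G, then ψ(C) ⊆ C for every endomorphism ψ of G ⊕ G.) -/
/-- A subgroup is fully invariant if it is mapped into itself by every endomorphism. -/
def FullyInvariant {G : Type*} [AddCommGroup G] (F : AddSubgroup G) : Prop :=
  ∀ φ : G →+ G, F.map φ ≤ F

/-- A subgroup is characteristic if it is mapped into itself by every automorphism. -/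
def IsCharacteristic {G : Type*} [AddCommGroup G] (F : AddSubgroup G) : Prop :=
  ∀ φ : G ≃+ G, F.map φ.toAddMonoidHom ≤ F

/-- The shear automorphism `(x, y) ↦ (x + f y, y)` of `G × G`. -/
def shearAut {G : Type*} [AddCommGroup G] (f : G →+ G) : (G × G) ≃+ (G × G) where
  toFun p := (p.1 + f p.2, p.2)
  invFun p := (p.1 - f p.2, p.2)
  left_inv p := by simp
  right_inv p := by simp
  map_add' p q := by
    ext <;> simp <;> abel

/-- The swap automorphism of `G × G`. -/
def swapAut (G : Type*) [AddCommGroup G] : (G × G) ≃+ (G × G) :=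
  AddEquiv.prodComm

/-- Every characteristic subgroup of `G ⊕ G` is fully invariant in `G ⊕ G`. -/
theorem characteristic_of_square_is_fullyInvariant
    (G : Type*) [AddCommGroup G] (C : AddSubgroup (G × G))
    (hC : IsCharacteristic C) : FullyInvariant C := by
  have swap_mem : ∀ {x y : G}, (x, y) ∈ C → (y, x) ∈ C := by
    intro x y h
    exact hC (swapAut G) ⟨(x, y), h, rfl⟩
  have key : ∀ (f : G →+ G) {x y : G}, (x, y) ∈ C → (f y, 0) ∈ C := by
    intro f x y h
    have h1 : (x + f y, y) ∈ C := hC (shearAut f) ⟨(x, y), h, rfl⟩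
    have h2 := C.sub_mem h1 h
    simpa using h2
  intro φ
  rintro _ ⟨⟨x, y⟩, h, rfl⟩
  have hsw : (y, x) ∈ C := swap_mem h
  set a : G →+ G := (AddMonoidHom.fst G G).comp (φ.comp (AddMonoidHom.inl G G)) with ha
  set b : G →+ G := (AddMonoidHom.fst G G).comp (φ.comp (AddMonoidHom.inr G G)) with hb
  set c : G →+ G := (AddMonoidHom.snd G G).comp (φ.comp (AddMonoidHom.inl G G)) with hc
  set d : G →+ G := (AddMonoidHom.snd G G).comp (φ.comp (AddMonoidHom.inr G G)) with hd
  have hφ : φ (x, y) = ((a x, 0) + (0, c x)) + ((b y, 0) + (0, d y)) := by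
    have hxy : (x, y) = ((x, 0) : G × G) + (0, y) := by simp
    rw [hxy, map_add]
    ext <;> simp [ha, hb, hc, hd]
  rw [hφ]
  exact C.add_mem
    (C.add_mem (key a hsw) (swap_mem (key c hsw)))
    (C.add_mem (key b h) (swap_mem (key d h)))
end

section
/- Let G be an abelian group. Then every endomorphism of the direct sum G ⊕ G is a sum of three automorphisms of G ⊕ G. -/
section aux

variable {G : Type*} [AddCommGroup G]

/-- Lower shear `(g, h) ↦ (g, f g + h)` as an additive automorphism of `G × G`. -/
def shearL (f : G →+ G) : (G × G) ≃+ (G × G) where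
  toFun p := (p.1, f p.1 + p.2)
  invFun p := (p.1, p.2 - f p.1)
  left_inv p := by simp
  right_inv p := by simp
  map_add' p q := by
    refine Prod.ext rfl ?_
    simp only [Prod.fst_add, Prod.snd_add, map_add]
    abel

/-- Upper shear `(g, h) ↦ (g + f h, h)` as an additive automorphism of `G × G`. -/
def shearU (f : G →+ G) : (G × G) ≃+ (G × G) where
  toFun p := (p.1 + f p.2, p.2)
  invFun p := (p.1 - f p.2, p.2)
  left_inv p := by simp
  right_inv p := by simp
  map_add' p q := by
    refine Prod.ext ?_ rfl
    simp only [Prod.fst_add, Prod.snd_add, map_add]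
    abel

/-- The automorphism `(g, h) ↦ (f g + h, g)`, realizing the matrix `[[f, 1], [1, 0]]`. -/
def swapS (f : G →+ G) : (G × G) ≃+ (G × G) where
  toFun p := (f p.1 + p.2, p.1)
  invFun p := (p.2, p.1 - f p.2)
  left_inv p := by simp
  right_inv p := by simp
  map_add' p q := by
    refine Prod.ext ?_ rfl
    simp only [Prod.fst_add, Prod.snd_add, map_add]
    abel

end aux

/-- Every endomorphism of `G ⊕ G` is a sum of three automorphisms of `G ⊕ G`. -/
theorem endo_of_square_is_sum_of_three_automorphisms
    (G : Type*) [AddCommGroup G] (ψ : (G × G) →+ (G × G)) :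
    ∃ α β γ : (G × G) ≃+ (G × G), ∀ x : G × G, ψ x = α x + β x + γ x := by
  classical
  -- matrix entries of ψ
  set a : G →+ G := (AddMonoidHom.fst G G).comp (ψ.comp (AddMonoidHom.inl G G)) with ha
  set b : G →+ G := (AddMonoidHom.fst G G).comp (ψ.comp (AddMonoidHom.inr G G)) with hb
  set c : G →+ G := (AddMonoidHom.snd G G).comp (ψ.comp (AddMonoidHom.inl G G)) with hc
  set d : G →+ G := (AddMonoidHom.snd G G).comp (ψ.comp (AddMonoidHom.inr G G)) with hd
  have hpsi : ∀ p : G × G, ψ p = (a p.1 + b p.2, c p.1 + d p.2) := by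
    intro p
    conv_lhs => rw [show p = (p.1, 0) + (0, p.2) from by simp, map_add]
    simp [ha, hb, hc, hd, Prod.ext_iff]
  set x : G →+ G := a - 2 • AddMonoidHom.id G with hx
  set z : G →+ G := d - 2 • AddMonoidHom.id G with hz
  refine ⟨(swapS x).trans (shearL z), shearU (b - AddMonoidHom.id G),
    shearL (c - AddMonoidHom.id G - z.comp x), fun p => ?_⟩
  rw [hpsi p]
  simp only [AddEquiv.trans_apply, shearL, shearU, swapS, AddEquiv.coe_mk,
    Equiv.coe_fn_mk, hx, hz, AddMonoidHom.sub_apply, AddMonoidHom.add_apply,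
    AddMonoidHom.smul_apply, AddMonoidHom.id_apply, AddMonoidHom.coe_comp,
    Function.comp_apply, map_add, map_sub, map_nsmul, Prod.mk_add_mk, Prod.mk.injEq]
  constructor <;> abel
end

section
/- Let A be an abelian group and suppose that every uniformly fully inert subgroup of A ⊕ A is commensurable with some fully invariant subgroup of A ⊕ A. Then every uniformly fully inert subgroup of A is commensurable with some fully invariant subgroup of A. -/
/-- A subgroup `S` is uniformly fully inert if there is a positive integer `m` such that
for every endomorphism `φ` the quotient `(φ(S) + S)/S` has at most `m` elements. -/
def UniformlyFullyInert {G : Type*} [AddCommGroup G] (S : AddSubgroup G) : Prop :=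
  ∃ m : ℕ, 0 < m ∧ ∀ φ : G →+ G,
    Finite (↥(S.map φ ⊔ S) ⧸ S.addSubgroupOf (S.map φ ⊔ S)) ∧
    Nat.card (↥(S.map φ ⊔ S) ⧸ S.addSubgroupOf (S.map φ ⊔ S)) ≤ m

/-- Two subgroups `B`, `C` are commensurable if `(B + C)/B` and `(B + C)/C` are finite. -/
def AddCommensurable {G : Type*} [AddCommGroup G] (B C : AddSubgroup G) : Prop :=
  Finite (↥(B ⊔ C) ⧸ B.addSubgroupOf (B ⊔ C)) ∧
  Finite (↥(B ⊔ C) ⧸ C.addSubgroupOf (B ⊔ C))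

/-! If `U` is uniformly fully inert in `A`, so is `U × U` in `A × A`: an endomorphism of `A × A`
is a matrix of four endomorphisms of `A`, and relative indices are submultiplicative along sups
and multiplicative along products. A fully invariant subgroup of `A × A` is stable under
`(a, b) ↦ (a, 0)`, `(b, 0)` and `(0, a)`, hence of the form `W × W` with `W` fully invariant
in `A`; and `U × U` is commensurable with `W × W` exactly when `U` is commensurable with `W`. -/

namespace AddSubgroup

variable {G H : Type*} [AddCommGroup G] [AddCommGroup H]

theorem relIndex_prod (S K : AddSubgroup G) (S' K' : AddSubgroup H) :
    (S.prod S').relIndex (K.prod K') = S.relIndex K * S'.relIndex K' := by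
  have := index_comap (S.prod S') (K.subtype.prodMap K'.subtype)
  rw [AddMonoidHom.range_prodMap, range_subtype, range_subtype, AddMonoidHom.prodMap_comap_prod,
    index_prod] at this
  exact this.symm

theorem relIndex_dvd_of_le_right {S K L : AddSubgroup G} (hSK : S ≤ K) (hKL : K ≤ L) :
    S.relIndex K ∣ S.relIndex L :=
  Dvd.intro _ (relIndex_mul_relIndex S K L hSK hKL)

theorem relIndex_sup_dvd_mul {S X : AddSubgroup G} (hSX : S ≤ X) (Y : AddSubgroup G) :
    S.relIndex (X ⊔ Y) ∣ S.relIndex X * S.relIndex Y := by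
  rw [← relIndex_mul_relIndex S X (X ⊔ Y) hSX le_sup_left, relIndex_sup_left]
  exact mul_dvd_mul_left _ (relIndex_dvd_of_le_left Y hSX)

theorem finite_quotient_addSubgroupOf_iff (S K : AddSubgroup G) :
    Finite (K ⧸ S.addSubgroupOf K) ↔ S.relIndex K ≠ 0 :=
  (index_ne_zero_iff_finite).symm

theorem map_prod_le {G' H' : Type*} [AddCommGroup G'] [AddCommGroup H']
    (ψ : G × H →+ G' × H') (U : AddSubgroup G) (V : AddSubgroup H) :
    (U.prod V).map ψ ≤
      (U.map ((AddMonoidHom.fst G' H').comp (ψ.comp (AddMonoidHom.inl G H))) ⊔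
          V.map ((AddMonoidHom.fst G' H').comp (ψ.comp (AddMonoidHom.inr G H)))).prod
        (U.map ((AddMonoidHom.snd G' H').comp (ψ.comp (AddMonoidHom.inl G H))) ⊔
          V.map ((AddMonoidHom.snd G' H').comp (ψ.comp (AddMonoidHom.inr G H)))) := by
  rintro _ ⟨⟨u, v⟩, ⟨hu, hv⟩, rfl⟩
  have hψ : ψ (u, v) = ψ (u, 0) + ψ (0, v) := by
    rw [← map_add, Prod.mk_add_mk, add_zero, zero_add]
  rw [hψ]
  exact ⟨add_mem_sup (mem_map_of_mem _ hu) (mem_map_of_mem _ hv),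
    add_mem_sup (mem_map_of_mem _ hu) (mem_map_of_mem _ hv)⟩

end AddSubgroup

open AddSubgroup

section

variable {G : Type*} [AddCommGroup G]

theorem addCommensurable_iff_relIndex (B C : AddSubgroup G) :
    AddCommensurable B C ↔ B.relIndex C ≠ 0 ∧ C.relIndex B ≠ 0 := by
  rw [AddCommensurable, finite_quotient_addSubgroupOf_iff, finite_quotient_addSubgroupOf_iff,
    relIndex_sup_left, sup_comm, relIndex_sup_left]

theorem uniformlyFullyInert_iff_exists_dvd (S : AddSubgroup G) :
    UniformlyFullyInert S ↔
      ∃ n ≠ 0, ∀ φ : G →+ G, S.relIndex (S.map φ ⊔ S) ∣ n := by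
  simp only [UniformlyFullyInert, finite_quotient_addSubgroupOf_iff]
  constructor
  · rintro ⟨m, -, hm⟩
    exact ⟨m.factorial, m.factorial_ne_zero, fun φ =>
      Nat.dvd_factorial (Nat.pos_of_ne_zero (hm φ).1) (hm φ).2⟩
  · rintro ⟨n, hn, hdvd⟩
    exact ⟨n, Nat.pos_of_ne_zero hn, fun φ =>
      ⟨ne_zero_of_dvd_ne_zero hn (hdvd φ), Nat.le_of_dvd (Nat.pos_of_ne_zero hn) (hdvd φ)⟩⟩

theorem UniformlyFullyInert.prod_self {U : AddSubgroup G} (hU : UniformlyFullyInert U) :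
    UniformlyFullyInert (U.prod U) := by
  rw [uniformlyFullyInert_iff_exists_dvd] at hU ⊢
  obtain ⟨n, hn, hdvd⟩ := hU
  have hsup (φ φ' : G →+ G) : U.relIndex ((U.map φ ⊔ U) ⊔ (U.map φ' ⊔ U)) ∣ n * n :=
    (relIndex_sup_dvd_mul le_sup_right _).trans (mul_dvd_mul (hdvd φ) (hdvd φ'))
  refine ⟨n * n * (n * n), by positivity, fun ψ => ?_⟩
  set f := AddMonoidHom.fst G G
  set g := AddMonoidHom.snd G G
  set T := ((U.map (f.comp (ψ.comp (.inl G G))) ⊔ U) ⊔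
      (U.map (f.comp (ψ.comp (.inr G G))) ⊔ U)).prod
    ((U.map (g.comp (ψ.comp (.inl G G))) ⊔ U) ⊔ (U.map (g.comp (ψ.comp (.inr G G))) ⊔ U))
  have hST : (U.prod U).map ψ ⊔ U.prod U ≤ T :=
    sup_le ((map_prod_le ψ U U).trans (prod_mono (sup_le_sup le_sup_left le_sup_left)
      (sup_le_sup le_sup_left le_sup_left)))
      (prod_mono (le_sup_right.trans le_sup_left) (le_sup_right.trans le_sup_left))
  calc (U.prod U).relIndex ((U.prod U).map ψ ⊔ U.prod U)
      ∣ (U.prod U).relIndex T := relIndex_dvd_of_le_right le_sup_right hST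
    _ ∣ n * n * (n * n) := by rw [relIndex_prod]; exact mul_dvd_mul (hsup _ _) (hsup _ _)

theorem FullyInvariant.apply_mem {F : AddSubgroup G} (hF : FullyInvariant F) (φ : G →+ G)
    {x : G} (hx : x ∈ F) : φ x ∈ F :=
  hF φ (mem_map_of_mem φ hx)

theorem FullyInvariant.comap_inl {F : AddSubgroup (G × G)} (hF : FullyInvariant F) :
    FullyInvariant (F.comap (AddMonoidHom.inl G G)) := by
  rintro φ _ ⟨a, ha, rfl⟩
  exact hF.apply_mem ((AddMonoidHom.inl G G).comp (φ.comp (AddMonoidHom.fst G G))) ha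

theorem FullyInvariant.eq_prod_comap_inl {F : AddSubgroup (G × G)} (hF : FullyInvariant F) :
    F = (F.comap (AddMonoidHom.inl G G)).prod (F.comap (AddMonoidHom.inl G G)) := by
  ext ⟨a, b⟩
  constructor
  · intro hab
    exact ⟨hF.apply_mem ((AddMonoidHom.inl G G).comp (AddMonoidHom.fst G G)) hab,
      hF.apply_mem ((AddMonoidHom.inl G G).comp (AddMonoidHom.snd G G)) hab⟩
  · rintro ⟨ha, hb⟩
    have h0b := hF.apply_mem ((AddMonoidHom.inr G G).comp (AddMonoidHom.fst G G)) hb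
    simpa using F.add_mem ha h0b

theorem addCommensurable_prod_iff {H : Type*} [AddCommGroup H] (U U' : AddSubgroup G)
    (V V' : AddSubgroup H) :
    AddCommensurable (U.prod V) (U'.prod V') ↔
      AddCommensurable U U' ∧ AddCommensurable V V' := by
  simp only [addCommensurable_iff_relIndex, relIndex_prod, mul_ne_zero_iff]
  tauto

end

/-- If every uniformly fully inert subgroup of `A ⊕ A` is commensurable with a fully
invariant subgroup of `A ⊕ A`, then the same holds in `A`. -/
theorem uniformlyFullyInert_of_square
    (A : Type*) [AddCommGroup A]
    (hsq : ∀ S : AddSubgroup (A × A), UniformlyFullyInert S →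
      ∃ F : AddSubgroup (A × A), FullyInvariant F ∧ AddCommensurable S F) :
    ∀ U : AddSubgroup A, UniformlyFullyInert U →
      ∃ V : AddSubgroup A, FullyInvariant V ∧ AddCommensurable U V := by
  intro U hU
  obtain ⟨F, hF, hUF⟩ := hsq _ hU.prod_self
  rw [hF.eq_prod_comap_inl, addCommensurable_prod_iff] at hUF
  exact ⟨_, hF.comap_inl, hUF.1⟩
end

section
/- Let G be an abelian group and let H be a uniformly fully inert subgroup of G. Then the subgroup H ⊕ H (the set of pairs (h₁, h₂) with h₁, h₂ ∈ H) is a uniformly fully inert subgroup of G ⊕ G. -/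
namespace AddSubgroup

theorem relIndex_prod_s5 {M N : Type*} [AddGroup M] [AddGroup N] (H P : AddSubgroup M)
    (K Q : AddSubgroup N) :
    (H.prod K).relIndex (P.prod Q) = H.relIndex P * K.relIndex Q := by
  have hsubgroupOf : (H.prod K).addSubgroupOf (P.prod Q) =
      ((H.addSubgroupOf P).prod (K.addSubgroupOf Q)).comap (P.prodEquiv Q).toAddMonoidHom := by
    ext; rfl
  rw [relIndex, hsubgroupOf]
  exact (index_comap_of_surjective _ (P.prodEquiv Q).surjective).trans (index_prod _ _)

theorem relIndex_dvd_of_le_right_s5 {G : Type*} [AddGroup G] {H K L : AddSubgroup G} [H.Normal]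
    (hKL : K ≤ L) : H.relIndex K ∣ H.relIndex L := by
  rw [← relIndex_sup_right K H, ← relIndex_sup_right L H]
  exact Dvd.intro _ (relIndex_mul_relIndex _ _ _ le_sup_right (sup_le_sup_right hKL H))

theorem relIndex_sup_dvd_mul_s5 {G : Type*} [AddCommGroup G] (H A B : AddSubgroup G) :
    H.relIndex (A ⊔ B) ∣ H.relIndex A * H.relIndex B := by
  have htower : H.relIndex (A ⊔ B) = H.relIndex B * (B ⊔ H).relIndex A := by
    rw [← relIndex_sup_right (A ⊔ B) H, sup_assoc, ← relIndex_sup_right A (B ⊔ H),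
      ← relIndex_sup_right B H, relIndex_mul_relIndex _ _ _ le_sup_right le_sup_right]
  rw [htower, mul_comm]
  exact mul_dvd_mul_right (relIndex_dvd_of_le_left A le_sup_right) _

theorem map_prod_le_prod_sup {M N M' N' : Type*} [AddGroup M] [AddGroup N] [AddGroup M']
    [AddGroup N'] (f : M × N →+ M' × N') (H : AddSubgroup M) (K : AddSubgroup N) :
    (H.prod K).map f ≤
      (H.map ((AddMonoidHom.fst M' N').comp (f.comp (AddMonoidHom.inl M N))) ⊔
          K.map ((AddMonoidHom.fst M' N').comp (f.comp (AddMonoidHom.inr M N)))).prod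
        (H.map ((AddMonoidHom.snd M' N').comp (f.comp (AddMonoidHom.inl M N))) ⊔
          K.map ((AddMonoidHom.snd M' N').comp (f.comp (AddMonoidHom.inr M N)))) := by
  rintro _ ⟨⟨a, b⟩, ⟨ha, hb⟩, rfl⟩
  have hsplit : f (a, b) = f (a, 0) + f (0, b) := by simp [← map_add]
  rw [hsplit]
  exact ⟨add_mem (mem_sup_left ⟨a, ha, rfl⟩) (mem_sup_right ⟨b, hb, rfl⟩),
    add_mem (mem_sup_left ⟨a, ha, rfl⟩) (mem_sup_right ⟨b, hb, rfl⟩)⟩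

theorem relIndex_prod_map_dvd {M N : Type*} [AddCommGroup M] [AddCommGroup N]
    (f : M × N →+ M × N) (H : AddSubgroup M) (K : AddSubgroup N) :
    (H.prod K).relIndex ((H.prod K).map f) ∣
      (H.relIndex (H.map ((AddMonoidHom.fst M N).comp (f.comp (AddMonoidHom.inl M N)))) *
        H.relIndex (K.map ((AddMonoidHom.fst M N).comp (f.comp (AddMonoidHom.inr M N))))) *
      (K.relIndex (H.map ((AddMonoidHom.snd M N).comp (f.comp (AddMonoidHom.inl M N)))) *
        K.relIndex (K.map ((AddMonoidHom.snd M N).comp (f.comp (AddMonoidHom.inr M N))))) := by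
  refine (relIndex_dvd_of_le_right_s5 (map_prod_le_prod_sup f H K)).trans ?_
  rw [relIndex_prod_s5]
  exact mul_dvd_mul (relIndex_sup_dvd_mul_s5 H _ _) (relIndex_sup_dvd_mul_s5 K _ _)

end AddSubgroup

open AddSubgroup

theorem uniformlyFullyInert_iff_exists_relIndex_dvd {G : Type*} [AddCommGroup G]
    {S : AddSubgroup G} :
    UniformlyFullyInert S ↔ ∃ n ≠ 0, ∀ φ : G →+ G, S.relIndex (S.map φ) ∣ n := by
  have hcard (φ : G →+ G) :
      Nat.card (↥(S.map φ ⊔ S) ⧸ S.addSubgroupOf (S.map φ ⊔ S)) = S.relIndex (S.map φ) :=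
    relIndex_sup_right _ _
  have hfinite (φ : G →+ G) :
      Finite (↥(S.map φ ⊔ S) ⧸ S.addSubgroupOf (S.map φ ⊔ S)) ↔ S.relIndex (S.map φ) ≠ 0 := by
    rw [← hcard, Nat.card_ne_zero]
    exact ⟨fun h => ⟨⟨0⟩, h⟩, And.right⟩
  simp only [UniformlyFullyInert, hfinite, hcard]
  constructor
  · rintro ⟨m, -, hm⟩
    exact ⟨m.factorial, m.factorial_ne_zero,
      fun φ => Nat.dvd_factorial (Nat.pos_of_ne_zero (hm φ).1) (hm φ).2⟩
  · rintro ⟨n, hn, hdvd⟩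
    have hpos : 0 < n := Nat.pos_of_ne_zero hn
    exact ⟨n, hpos, fun φ => ⟨ne_zero_of_dvd_ne_zero hn (hdvd φ), Nat.le_of_dvd hpos (hdvd φ)⟩⟩

/-- If `H` is uniformly fully inert in `G`, then `H ⊕ H` is uniformly fully inert
in `G ⊕ G`. -/
theorem uniformlyFullyInert_prod
    (G : Type*) [AddCommGroup G] (H : AddSubgroup G)
    (hH : UniformlyFullyInert H) :
    UniformlyFullyInert (H.prod H) := by
  obtain ⟨n, hn, hdvd⟩ := uniformlyFullyInert_iff_exists_relIndex_dvd.1 hH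
  refine uniformlyFullyInert_iff_exists_relIndex_dvd.2
    ⟨n * n * (n * n), by positivity, fun φ => ?_⟩
  exact (relIndex_prod_map_dvd φ H H).trans <|
    mul_dvd_mul (mul_dvd_mul (hdvd _) (hdvd _)) (mul_dvd_mul (hdvd _) (hdvd _))
end

section
/- Let G be an abelian group and let C be a fully invariant subgroup of G ⊕ G. Then C = F ⊕ F (i.e., C is exactly the set of pairs (f₁, f₂) with f₁, f₂ ∈ F), where F = {x ∈ G : (x, 0) ∈ C}, and moreover F is a fully invariant subgroup of G. -/
/-- A fully invariant subgroup `C` of `G ⊕ G` is of the form `F ⊕ F`, where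
`F = {x ∈ G : (x, 0) ∈ C}` is a fully invariant subgroup of `G`. -/
theorem fullyInvariant_square_is_prod
    (G : Type*) [AddCommGroup G] (C : AddSubgroup (G × G))
    (hC : FullyInvariant C) :
    C = (C.comap (AddMonoidHom.inl G G)).prod (C.comap (AddMonoidHom.inl G G)) ∧
      FullyInvariant (C.comap (AddMonoidHom.inl G G)) := by
  constructor
  · ext ⟨a, b⟩
    simp only [AddSubgroup.mem_prod, AddSubgroup.mem_comap]
    constructor
    · intro hab
      constructor
      · exact hC ((AddMonoidHom.inl G G).comp (AddMonoidHom.fst G G)) ⟨(a, b), hab, rfl⟩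
      · exact hC ((AddMonoidHom.inl G G).comp (AddMonoidHom.snd G G)) ⟨(a, b), hab, rfl⟩
    · rintro ⟨ha, hb⟩
      have hb' : ((0 : G), b) ∈ C :=
        hC ((AddMonoidHom.inr G G).comp (AddMonoidHom.fst G G)) ⟨(b, 0), hb, rfl⟩
      have := C.add_mem ha hb'
      simpa using this
  · intro φ x hx
    obtain ⟨y, hy, rfl⟩ := hx
    simp only [AddSubgroup.mem_comap, AddMonoidHom.inl_apply] at hy ⊢
    have := hC (AddMonoidHom.prodMap φ φ) ⟨(y, 0), hy, rfl⟩
    simpa using this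
end
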